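/- Let L₀ be a closed subspace of a Hilbert space H with orthogonal projection P₀, and let L be a closed subspace such that P_L - P₀ is compact. Then (L, L₀⊥) is a Fredholm pair: L ∩ L₀⊥ is finite-dimensional and L + L₀⊥ is closed of finite codimension. -/

import Mathlib

/-!
Write `K = P_L - P₀`. It is the identity on `L ⊓ L₀ᗮ` and minus the identity on
`L₀ ⊓ Lᗮ = (L ⊔ L₀ᗮ)ᗮ`, so both are closed subspaces with compact identity, hence
finite-dimensional. On `L` we have `P₀ = 1 - K`; compressing `K` to the complement `N` of
`L ⊓ L₀ᗮ` in `L` gives a compact operator without eigenvalue `1` (if `P₀ x ⊥ N` for `x ∈ N`, then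
`‖P₀ x‖² = ⟪P₀ x, x⟫ = 0`), so by the Fredholm alternative `P₀` is bounded below on `N`.
Then `P₀ N` is closed and `L ⊔ L₀ᗮ = P₀⁻¹ (P₀ N)` is closed.
-/

variable {H : Type*} [NormedAddCommGroup H] [InnerProductSpace ℂ H] [CompleteSpace H]

/-- The orthogonal projection onto a closed subspace, as an operator `H →L[ℂ] H`. -/
noncomputable def orthProj (L : Submodule ℂ H) (hL : IsClosed (L : Set H)) : H →L[ℂ] H :=
  haveI := hL.completeSpace_coe
  L.subtypeL ∘L L.orthogonalProjectionOnto

section TopologicalVectorSpace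

variable {𝕜 E : Type*} [NontriviallyNormedField 𝕜] [CompleteSpace 𝕜]
  [AddCommGroup E] [Module 𝕜 E] [TopologicalSpace E] [T2Space E] [IsTopologicalAddGroup E]
  [ContinuousSMul 𝕜 E]

theorem Submodule.finiteDimensional_of_isCompactOperator_of_eqOn_id {f : E → E}
    (hf : IsCompactOperator f) {V : Submodule 𝕜 E} (hV : IsClosed (V : Set E))
    (hfV : Set.EqOn f id V) : FiniteDimensional 𝕜 V := by
  have hmaps : ∀ x : V, (f ∘ V.subtypeL) x ∈ V := fun x ↦ by simp [hfV x.2]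
  have hid : Set.codRestrict (f ∘ V.subtypeL) V hmaps = id :=
    funext fun x ↦ Subtype.ext (hfV x.2)
  exact .of_isCompactOperator_id (hid ▸ (hf.comp_clm V.subtypeL).codRestrict hmaps hV)

end TopologicalVectorSpace

theorem Submodule.isClosed_sup_ker_of_antilipschitzWith {𝕜 E F : Type*}
    [NontriviallyNormedField 𝕜] [NormedAddCommGroup E] [NormedSpace 𝕜 E]
    [NormedAddCommGroup F] [NormedSpace 𝕜 F] (f : E →L[𝕜] F) {N : Submodule 𝕜 E}
    [CompleteSpace N] {C : NNReal} (hf : AntilipschitzWith C (f ∘L N.subtypeL)) :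
    IsClosed ((N ⊔ f.ker : Submodule 𝕜 E) : Set E) := by
  rw [← Submodule.comap_map_eq]
  have hrange : ((N.map (f : E →ₗ[𝕜] F) : Submodule 𝕜 F) : Set F) =
      Set.range (f ∘L N.subtypeL) := by
    ext; simp
  rw [Submodule.comap_coe, hrange]
  exact (hf.isClosed_range (f ∘L N.subtypeL).uniformContinuous).preimage f.continuous

section InnerProductSpace

variable {𝕜 E : Type*} [RCLike 𝕜] [NormedAddCommGroup E] [InnerProductSpace 𝕜 E]

theorem Submodule.starProjection_eq_zero_of_mem_of_mem_orthogonal {W V : Submodule 𝕜 E}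
    [V.HasOrthogonalProjection] {x : E} (hx : x ∈ W) (h : V.starProjection x ∈ Wᗮ) :
    V.starProjection x = 0 := by
  have : inner 𝕜 (V.starProjection x) (V.starProjection x) = 0 := by
    rw [V.inner_starProjection_left_eq_right,
      V.starProjection_eq_self_iff.mpr (V.starProjection_apply_mem x)]
    exact Submodule.inner_right_of_mem_orthogonal hx h
  exact inner_self_eq_zero.mp this

open Module End in
theorem Submodule.exists_antilipschitzWith_starProjection_comp_subtypeL {U V N : Submodule 𝕜 E}
    [U.HasOrthogonalProjection] [V.HasOrthogonalProjection] [CompleteSpace N]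
    (h : IsCompactOperator (U.starProjection - V.starProjection)) (hNU : N ≤ U)
    (hNV : Disjoint N Vᗮ) : ∃ C, AntilipschitzWith C (V.starProjection ∘L N.subtypeL) := by
  set Q := N.orthogonalProjectionOnto
  set T : N →L[𝕜] N := Q ∘L (U.starProjection - V.starProjection) ∘L N.subtypeL
  have hT : IsCompactOperator T := (h.comp_clm N.subtypeL).clm_comp Q
  have hTx : ∀ x : N, (T - (1 : 𝕜) • 1) x = -Q (V.starProjection x) := by
    intro x
    simp [T, Q, U.starProjection_eq_self_iff.mpr (hNU x.2),
      orthogonalProjectionOnto_mem_subspace_eq_self]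
  have hker : ∀ x : N, Q (V.starProjection x) = 0 → x = 0 := by
    intro x hx
    have hPx : V.starProjection x = 0 :=
      starProjection_eq_zero_of_mem_of_mem_orthogonal x.2 (by rwa [← ker_orthogonalProjectionOnto])
    exact Subtype.ext (hNV.le_bot ⟨x.2, (V.starProjection_apply_eq_zero_iff).mp hPx⟩)
  have hnot : ¬ HasEigenvalue (T : End 𝕜 N) 1 := by
    intro hev
    obtain ⟨x, hx, hx0⟩ := hev.exists_hasEigenvector
    refine hx0 (hker x (neg_eq_zero.mp ?_))
    rw [← hTx]
    simpa [sub_eq_zero] using mem_eigenspace_iff.mp hx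
  obtain ⟨C, hC⟩ := hT.antilipschitz_of_not_hasEigenvalue one_ne_zero hnot
  refine ⟨C, (V.starProjection ∘L N.subtypeL).antilipschitz_of_bound fun x ↦ ?_⟩
  calc ‖x‖ ≤ C * ‖(T - (1 : 𝕜) • 1) x‖ := hC.le_mul_norm (map_zero _) x
    _ = C * ‖Q (V.starProjection x)‖ := by rw [hTx, norm_neg]
    _ ≤ C * ‖V.starProjection x‖ := by gcongr; exact N.norm_orthogonalProjectionOnto_apply_le _

theorem Submodule.finiteDimensional_inf_orthogonal_of_isCompactOperator {U V : Submodule 𝕜 E}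
    [CompleteSpace U] [CompleteSpace V]
    (h : IsCompactOperator (U.starProjection - V.starProjection)) :
    FiniteDimensional 𝕜 ↥(U ⊓ Vᗮ) := by
  refine finiteDimensional_of_isCompactOperator_of_eqOn_id h
    ((completeSpace_coe_iff_isComplete.mp ‹_›).isClosed.inter V.isClosed_orthogonal) ?_
  rintro x ⟨hxU, hxV⟩
  simp [U.starProjection_eq_self_iff.mpr hxU, (V.starProjection_apply_eq_zero_iff).mpr hxV]

theorem Submodule.isClosed_sup_orthogonal_of_isCompactOperator [CompleteSpace E]
    {U V : Submodule 𝕜 E} [CompleteSpace U] [CompleteSpace V]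
    (h : IsCompactOperator (U.starProjection - V.starProjection)) :
    IsClosed ((U ⊔ Vᗮ : Submodule 𝕜 E) : Set E) := by
  set M := U ⊓ Vᗮ
  have : FiniteDimensional 𝕜 M := finiteDimensional_inf_orthogonal_of_isCompactOperator h
  set N := Mᗮ ⊓ U
  have hsplit : U ⊔ Vᗮ = N ⊔ V.starProjection.ker := by
    conv_lhs => rw [← sup_orthogonal_inf_of_hasOrthogonalProjection (inf_le_left : M ≤ U)]
    rw [ker_starProjection, sup_comm M, sup_assoc, sup_eq_right.mpr (inf_le_right : M ≤ Vᗮ)]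
  have : CompleteSpace N := (M.isClosed_orthogonal.inter
    (completeSpace_coe_iff_isComplete.mp ‹_›).isClosed).completeSpace_coe
  have hNV : Disjoint N Vᗮ := by
    rw [Submodule.disjoint_def]
    exact fun x ⟨hxM, hxU⟩ hxV ↦ M.orthogonal_disjoint.le_bot ⟨⟨hxU, hxV⟩, hxM⟩
  obtain ⟨C, hC⟩ := exists_antilipschitzWith_starProjection_comp_subtypeL h inf_le_right hNV
  rw [hsplit]
  exact isClosed_sup_ker_of_antilipschitzWith _ hC

end InnerProductSpace

/-- If `L₀` and `L` are closed subspaces of a Hilbert space `H` with `P_L - P_{L₀}`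
compact, then `(L, L₀ᗮ)` is a Fredholm pair: `L ∩ L₀ᗮ` is finite-dimensional and
`L + L₀ᗮ` is closed of finite codimension. -/
theorem compact_perturbation_fredholm_pair (L₀ L : Submodule ℂ H)
    (hL₀c : IsClosed (L₀ : Set H)) (hLc : IsClosed (L : Set H))
    (hcpt : IsCompactOperator (⇑(orthProj L hLc - orthProj L₀ hL₀c))) :
    FiniteDimensional ℂ ↥(L ⊓ L₀ᗮ) ∧
      IsClosed ((L ⊔ L₀ᗮ : Submodule ℂ H) : Set H) ∧
      FiniteDimensional ℂ ↥((L ⊔ L₀ᗮ)ᗮ) := by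
  have := hL₀c.completeSpace_coe
  have := hLc.completeSpace_coe
  have hK : IsCompactOperator (L.starProjection - L₀.starProjection) := hcpt
  have hK' : IsCompactOperator (L₀.starProjection - L.starProjection) := by
    rw [← neg_sub, FunLike.coe_neg]
    exact hK.neg
  refine ⟨Submodule.finiteDimensional_inf_orthogonal_of_isCompactOperator hK,
    Submodule.isClosed_sup_orthogonal_of_isCompactOperator hK, ?_⟩
  rw [← Submodule.inf_orthogonal, Submodule.orthogonal_orthogonal, inf_comm]
  exact Submodule.finiteDimensional_inf_orthogonal_of_isCompactOperator hK'
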